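/- arXiv:2008.07954 — 2 statements merged into one kernel-verified Lean document; each statement's English description precedes it below -/
import Mathlib

section
/- The function g(ρ) = 2ρφ(ρ)/(2Φ(ρ)−1) is strictly decreasing on (0, ∞). -/
open MeasureTheory ProbabilityTheory Real Set

/-- Standard normal PDF φ. -/
noncomputable def stdPDF (x : ℝ) : ℝ := Real.exp (-x ^ 2 / 2) / Real.sqrt (2 * Real.pi)

/-- Standard normal CDF Φ. -/
noncomputable def stdCDF (x : ℝ) : ℝ := ((gaussianReal 0 1) (Set.Iic x)).toReal

/-- The doubly truncated normal distribution: N(μ, η²) conditioned on [μ-ρη, μ+ρη]. -/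
noncomputable def DTN (μ η ρ : ℝ) : Measure ℝ :=
  ProbabilityTheory.cond (gaussianReal μ ⟨η ^ 2, sq_nonneg η⟩) (Set.Icc (μ - ρ * η) (μ + ρ * η))

/-- The DTN density. -/
noncomputable def dtnPDF (μ η ρ : ℝ) (x : ℝ) : ℝ :=
  if x ∈ Set.Icc (μ - ρ * η) (μ + ρ * η) then
    (1 / η) * stdPDF ((x - μ) / η) / (2 * stdCDF ρ - 1) else 0

/- Since φ' = -ρφ, the sign of g' is that of N(ρ) = (1 - ρ²)(2Φ(ρ) - 1) - 2ρφ(ρ).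
Differentiating once more, N'(ρ) = -2ρ(2Φ(ρ) - 1) < 0 for ρ > 0, and N(0) = 0,
so N < 0 on (0, ∞). -/

lemma stdPDF_eq_gaussianPDFReal : stdPDF = gaussianPDFReal 0 1 := by
  funext x
  simp [stdPDF, gaussianPDFReal, div_eq_mul_inv, mul_comm]

lemma stdPDF_pos (x : ℝ) : 0 < stdPDF x := by
  rw [stdPDF_eq_gaussianPDFReal]
  exact gaussianPDFReal_pos 0 1 x one_ne_zero

lemma continuous_stdPDF : Continuous stdPDF := by
  unfold stdPDF
  fun_prop

lemma integrable_stdPDF : Integrable stdPDF := by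
  rw [stdPDF_eq_gaussianPDFReal]
  exact integrable_gaussianPDFReal 0 1

lemma stdPDF_neg (x : ℝ) : stdPDF (-x) = stdPDF x := by
  simp [stdPDF]

lemma hasDerivAt_stdPDF (x : ℝ) : HasDerivAt stdPDF (-x * stdPDF x) x := by
  have hexp : HasDerivAt (fun y : ℝ => -y ^ 2 / 2) (-x) x := by
    refine (((hasDerivAt_pow 2 x).neg).div_const 2).congr_deriv ?_
    ring
  refine (hexp.exp.div_const (Real.sqrt (2 * Real.pi))).congr_deriv ?_
  simp only [stdPDF]
  ring

lemma stdCDF_eq_integral (x : ℝ) : stdCDF x = ∫ t in Iic x, stdPDF t := by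
  rw [stdCDF, gaussianReal_apply_eq_integral 0 one_ne_zero, ENNReal.toReal_ofReal,
    stdPDF_eq_gaussianPDFReal]
  exact setIntegral_nonneg measurableSet_Iic fun t _ => gaussianPDFReal_nonneg 0 1 t

lemma stdCDF_sub_stdCDF (a b : ℝ) : stdCDF b - stdCDF a = ∫ t in a..b, stdPDF t := by
  rw [stdCDF_eq_integral, stdCDF_eq_integral]
  exact intervalIntegral.integral_Iic_sub_Iic integrable_stdPDF.integrableOn
    integrable_stdPDF.integrableOn

lemma hasDerivAt_stdCDF (x : ℝ) : HasDerivAt stdCDF (stdPDF x) x := by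
  have hFTC := (continuous_stdPDF.integral_hasStrictDerivAt 0 x).hasDerivAt
  have hCDF : stdCDF = fun u => stdCDF 0 + ∫ t in (0 : ℝ)..u, stdPDF t := by
    funext u
    rw [← stdCDF_sub_stdCDF 0 u]
    ring
  rw [hCDF]
  exact hFTC.const_add (stdCDF 0)

lemma strictMono_stdCDF : StrictMono stdCDF :=
  strictMono_of_deriv_pos fun x => (hasDerivAt_stdCDF x).deriv ▸ stdPDF_pos x

lemma stdCDF_zero : stdCDF 0 = 1 / 2 := by
  have hsymm : ∫ t in Iic (0 : ℝ), stdPDF t = ∫ t in Ioi (0 : ℝ), stdPDF t := by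
    simpa only [stdPDF_neg, neg_zero] using integral_comp_neg_Iic (0 : ℝ) stdPDF
  have htotal : (∫ t in Iic (0 : ℝ), stdPDF t) + ∫ t in Ioi (0 : ℝ), stdPDF t = 1 := by
    rw [← setIntegral_union (Iic_disjoint_Ioi le_rfl) measurableSet_Ioi
      integrable_stdPDF.integrableOn integrable_stdPDF.integrableOn, Iic_union_Ioi,
      Measure.restrict_univ, stdPDF_eq_gaussianPDFReal]
    exact integral_gaussianPDFReal_eq_one 0 one_ne_zero
  rw [stdCDF_eq_integral]
  linarith

/-- The standard normal mass of `[-ρ, ρ]`. -/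
noncomputable def centralMass (ρ : ℝ) : ℝ := 2 * stdCDF ρ - 1

lemma hasDerivAt_centralMass (x : ℝ) : HasDerivAt centralMass (2 * stdPDF x) x :=
  ((hasDerivAt_stdCDF x).const_mul 2).sub_const 1

lemma centralMass_zero : centralMass 0 = 0 := by
  simp [centralMass, stdCDF_zero]

lemma centralMass_pos {ρ : ℝ} (hρ : 0 < ρ) : 0 < centralMass ρ := by
  have := strictMono_stdCDF hρ
  rw [stdCDF_zero] at this
  unfold centralMass
  linarith

lemma hasDerivAt_two_mul_mul_stdPDF (x : ℝ) :
    HasDerivAt (fun ρ => 2 * ρ * stdPDF ρ) (2 * (1 - x ^ 2) * stdPDF x) x := by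
  refine (((hasDerivAt_id x).const_mul 2).mul (hasDerivAt_stdPDF x)).congr_deriv ?_
  simp only [id_eq]
  ring

noncomputable def ratioDerivNumerator (ρ : ℝ) : ℝ :=
  (1 - ρ ^ 2) * centralMass ρ - 2 * ρ * stdPDF ρ

lemma hasDerivAt_ratioDerivNumerator (x : ℝ) :
    HasDerivAt ratioDerivNumerator (-2 * x * centralMass x) x := by
  have hpoly : HasDerivAt (fun ρ : ℝ => 1 - ρ ^ 2) (-(2 * x)) x := by
    simpa using (hasDerivAt_pow 2 x).const_sub 1
  refine ((hpoly.mul (hasDerivAt_centralMass x)).sub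
    (hasDerivAt_two_mul_mul_stdPDF x)).congr_deriv ?_
  ring

lemma ratioDerivNumerator_neg {ρ : ℝ} (hρ : 0 < ρ) : ratioDerivNumerator ρ < 0 := by
  have hanti : StrictAntiOn ratioDerivNumerator (Ici 0) := by
    refine strictAntiOn_of_deriv_neg (convex_Ici 0)
      (fun x _ => (hasDerivAt_ratioDerivNumerator x).continuousAt.continuousWithinAt)
      fun x hx => ?_
    rw [interior_Ici] at hx
    rw [(hasDerivAt_ratioDerivNumerator x).deriv]
    nlinarith [mul_pos (mem_Ioi.mp hx) (centralMass_pos hx)]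
  have hzero : ratioDerivNumerator 0 = 0 := by
    simp [ratioDerivNumerator, centralMass_zero]
  simpa [hzero] using hanti self_mem_Ici hρ.le hρ

lemma hasDerivAt_two_mul_mul_stdPDF_div_centralMass {x : ℝ} (hx : 0 < x) :
    HasDerivAt (fun ρ => 2 * ρ * stdPDF ρ / centralMass ρ)
      (2 * stdPDF x * ratioDerivNumerator x / centralMass x ^ 2) x := by
  refine ((hasDerivAt_two_mul_mul_stdPDF x).div (hasDerivAt_centralMass x)
    (centralMass_pos hx).ne').congr_deriv ?_
  unfold ratioDerivNumerator
  ring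

theorem stmt8 :
    StrictAntiOn (fun ρ : ℝ => 2 * ρ * stdPDF ρ / (2 * stdCDF ρ - 1))
      (Set.Ioi 0) := by
  change StrictAntiOn (fun ρ => 2 * ρ * stdPDF ρ / centralMass ρ) (Ioi 0)
  have hderiv {x : ℝ} (hx : 0 < x) := hasDerivAt_two_mul_mul_stdPDF_div_centralMass hx
  refine strictAntiOn_of_deriv_neg (convex_Ioi 0)
    (fun x hx => (hderiv hx).continuousAt.continuousWithinAt) fun x hx => ?_
  rw [interior_Ioi] at hx
  rw [(hderiv hx).deriv]
  exact div_neg_of_neg_of_pos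
    (mul_neg_of_pos_of_neg (mul_pos two_pos (stdPDF_pos x)) (ratioDerivNumerator_neg hx))
    (pow_pos (centralMass_pos hx) 2)
end

section
/- If x ∼ DTN(μ, η², ρ) and x' ∼ DTN(μ, η², ρ') with 0 < ρ ≤ ρ', then Var[x] ≤ Var[x']. -/
open MeasureTheory ProbabilityTheory Real Set

/-!
Since N(μ, η²) and the interval [μ - ρη, μ + ρη] are both symmetric under x ↦ 2μ - x, the
truncated distribution has mean μ, so its variance is the N(μ, η²)-average of (x - μ)² over the
interval. That average is at most (ρη)², while enlarging the interval to radius ρ'η only adds mass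
where (x - μ)² ≥ (ρη)²; hence the average cannot decrease.
-/

section SetAverage

variable {α : Type*} [MeasurableSpace α] {ν : Measure α} [IsFiniteMeasure ν] {s t : Set α}
  {f : α → ℝ} {c : ℝ}

theorem setAverage_le_setAverage_of_subset (hs : MeasurableSet s) (ht : MeasurableSet t)
    (hst : s ⊆ t) (hνs : ν s ≠ 0) (hf : IntegrableOn f t ν) (hfs : ∀ x ∈ s, f x ≤ c)
    (hft : ∀ x ∈ t \ s, c ≤ f x) :
    ⨍ x in s, f x ∂ν ≤ ⨍ x in t, f x ∂ν := by
  have hsum : ∫ x in t, f x ∂ν = ∫ x in s, f x ∂ν + ∫ x in t \ s, f x ∂ν := by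
    rw [setIntegral_sdiff hs hf hst]; ring
  have hmass : ν.real t = ν.real s + ν.real (t \ s) := by
    rw [measureReal_sdiff hst hs]; ring
  have hinner : ∫ x in s, f x ∂ν ≤ ν.real s * c := by
    simpa [setIntegral_const] using
      setIntegral_mono_on (hf.mono_set hst) integrableOn_const hs hfs
  have houter : ν.real (t \ s) * c ≤ ∫ x in t \ s, f x ∂ν := by
    simpa [setIntegral_const] using
      setIntegral_mono_on integrableOn_const (hf.mono_set sdiff_subset) (ht.diff hs) hft
  have hpos : 0 < ν.real s := ENNReal.toReal_pos hνs (measure_ne_top ν s)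
  have hrest : 0 ≤ ν.real (t \ s) := measureReal_nonneg
  rw [setAverage_eq, setAverage_eq, hsum, hmass, smul_eq_mul, smul_eq_mul, ← div_eq_inv_mul,
    ← div_eq_inv_mul, div_le_div_iff₀ hpos (by positivity)]
  nlinarith [mul_le_mul_of_nonneg_right hinner hrest, mul_le_mul_of_nonneg_left houter hpos.le]

end SetAverage

theorem ProbabilityTheory.map_cond_eq_self {Ω : Type*} [MeasurableSpace Ω] {ν : Measure Ω}
    {r : Ω → Ω} {s : Set Ω} (hr : Measurable r) (hs : MeasurableSet s) (hν : ν.map r = ν)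
    (hrs : r ⁻¹' s = s) :
    (ν[|s]).map r = ν[|s] := by
  have hνs : ν (r ⁻¹' s) = ν s := by rw [← Measure.map_apply hr hs, hν]
  rw [ProbabilityTheory.cond, Measure.map_smul, ← hrs, ← Measure.restrict_map hr hs, hν, hνs, hrs]

theorem integral_id_eq_of_map_reflect_eq_self {P : Measure ℝ} [IsProbabilityMeasure P] {c : ℝ}
    (hP : P.map (fun x ↦ 2 * c - x) = P) (hint : Integrable id P) :
    ∫ x, x ∂P = c := by
  have hreflect : ∫ x, x ∂P = ∫ x, (2 * c - x) ∂P := by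
    conv_lhs => rw [← hP]
    exact integral_map (by fun_prop) aestronglyMeasurable_id
  rw [integral_sub (g := fun x ↦ x) (integrable_const _) hint, integral_const, probReal_univ,
    one_smul] at hreflect
  linarith

section GaussianCondIcc

variable {μ r : ℝ} {v : NNReal}

lemma gaussianReal_Icc_ne_zero (hv : v ≠ 0) (hr : 0 < r) :
    gaussianReal μ v (Icc (μ - r) (μ + r)) ≠ 0 := by
  refine fun h ↦ absurd (gaussianReal_absolutelyContinuous' μ hv h) ?_
  rw [Real.volume_Icc, ENNReal.ofReal_eq_zero, not_le]
  linarith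

lemma map_reflect_gaussianReal_cond_Icc :
    ((gaussianReal μ v)[|Icc (μ - r) (μ + r)]).map (fun x ↦ 2 * μ - x)
      = (gaussianReal μ v)[|Icc (μ - r) (μ + r)] := by
  refine map_cond_eq_self (by fun_prop) measurableSet_Icc ?_ ?_
  · rw [gaussianReal_map_const_sub]; ring_nf
  · ext x
    simp only [mem_preimage, mem_Icc]
    constructor <;> rintro ⟨h₁, h₂⟩ <;> constructor <;> linarith

lemma integral_id_gaussianReal_cond_Icc (hv : v ≠ 0) (hr : 0 < r) :
    ∫ x, x ∂(gaussianReal μ v)[|Icc (μ - r) (μ + r)] = μ := by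
  have := cond_isProbabilityMeasure (gaussianReal_Icc_ne_zero (μ := μ) hv hr)
  refine integral_id_eq_of_map_reflect_eq_self map_reflect_gaussianReal_cond_Icc ?_
  exact ((memLp_id_gaussianReal 1).integrable le_rfl).restrict.smul_measure
    (ENNReal.inv_ne_top.2 (gaussianReal_Icc_ne_zero hv hr))

lemma variance_gaussianReal_cond_Icc (hv : v ≠ 0) (hr : 0 < r) :
    variance id ((gaussianReal μ v)[|Icc (μ - r) (μ + r)])
      = ⨍ x in Icc (μ - r) (μ + r), (x - μ) ^ 2 ∂gaussianReal μ v := by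
  rw [variance_eq_integral aemeasurable_id]
  simp only [id, integral_id_gaussianReal_cond_Icc hv hr]
  exact (setAverage_eq' _ _ _).symm

end GaussianCondIcc

theorem stmt10 (μ η ρ ρ' : ℝ) (hη : 0 < η) (hρ : 0 < ρ) (hρρ' : ρ ≤ ρ') :
    variance id (DTN μ η ρ) ≤ variance id (DTN μ η ρ') := by
  rw [DTN, DTN]
  -- the anonymous constructor is typed as the underlying subtype, which hides the `ℝ≥0` instances
  set v : NNReal := ⟨η ^ 2, sq_nonneg η⟩
  have hv : v ≠ 0 := by
    rw [ne_eq, ← NNReal.coe_eq_zero]; exact pow_ne_zero 2 hη.ne'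
  have hr : 0 < ρ * η := mul_pos hρ hη
  have hr' : ρ * η ≤ ρ' * η := mul_le_mul_of_nonneg_right hρρ' hη.le
  rw [variance_gaussianReal_cond_Icc hv hr, variance_gaussianReal_cond_Icc hv (hr.trans_le hr')]
  refine setAverage_le_setAverage_of_subset (c := (ρ * η) ^ 2) measurableSet_Icc measurableSet_Icc
    (Icc_subset_Icc (by linarith) (by linarith)) (gaussianReal_Icc_ne_zero hv hr)
    (by fun_prop : Continuous fun x ↦ (x - μ) ^ 2).integrableOn_Icc ?_ ?_
  · rintro x ⟨hlo, hhi⟩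
    nlinarith
  · rintro x ⟨-, hout⟩
    rw [mem_Icc, not_and_or, not_le, not_le] at hout
    rcases hout with hlt | hgt <;> nlinarith
end
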